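/- arXiv:1210.2008 — 5 statements merged into one kernel-verified Lean document; each statement's English description precedes it below -/
import Mathlib

section
/- Let M be a weakly quasiminimal pregeometry structure. If b̄ and b̄' are finite tuples from M with the same quantifier-free type, and ā is any finite tuple from M, then there exists a tuple ā' in M such that ā b̄ and ā' b̄' have the same quantifier-free type (i.e. M is ℵ₀-homogeneous over the empty set). -/
/-!
Extend `b ↦ b'` one element `x` at a time. If `x ∈ cl b`, QM5 over the empty set provides `x'`.
Otherwise `x` is generic over `b`. A back-and-forth argument with QM5 and QM1 enumerates `cl b` and
`cl b'` with the same type over `b` and `b'`. QM1 also transports a basis of `b`, of size `d`, to a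
spanning set of `b'`; since that basis together with `x` is independent of size `d + 1`, Steinitz
exchange shows `cl b' ≠ M`. QM4 over the two closures then applies to `x` and any `x' ∉ cl b'`.
-/

open FirstOrder Set

namespace QM

/-- Equality of quantifier-free types of two assignments (possibly in different structures). -/
def EqQF (L : FirstOrder.Language) {M N : Type*} [L.Structure M] [L.Structure N]
    {α : Type*} (a : α → M) (b : α → N) : Prop :=
  ∀ φ : L.Formula α, φ.IsQF → (φ.Realize a ↔ φ.Realize b)

/-- Equality of quantifier-free types over a parameter set `B`. -/
def EqQFOver (L : FirstOrder.Language) {M : Type*} [L.Structure M] (B : Set M) {n : ℕ}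
    (a b : Fin n → M) : Prop :=
  ∀ (m : ℕ) (c : Fin m → M), (∀ i, c i ∈ B) →
    EqQF L (Sum.elim a c) (Sum.elim b c)

/-- A pregeometry (combinatorial closure with exchange). -/
structure Pregeom (M : Type*) where
  cl : Set M → Set M
  subset_cl : ∀ A, A ⊆ cl A
  mono : ∀ ⦃A B : Set M⦄, A ⊆ B → cl A ⊆ cl B
  cl_idem : ∀ A, cl (cl A) = cl A
  finChar : ∀ (A : Set M) (x : M), x ∈ cl A → ∃ F : Finset M, ↑F ⊆ A ∧ x ∈ cl ↑F
  exchange : ∀ (A : Set M) (a b : M), a ∈ cl (insert b A) → a ∉ cl A → b ∈ cl (insert a A)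

variable (L : FirstOrder.Language) (M : Type*) [L.Structure M] (P : Pregeom M)

def Indep (P : Pregeom M) (S : Set M) : Prop := ∀ x ∈ S, x ∉ P.cl (S \ {x})

/-- QM1: the pregeometry is determined by the language. -/
def QM1 : Prop :=
  ∀ (n : ℕ) (a a' : M) (b b' : Fin n → M),
    EqQF L (Fin.cons a b) (Fin.cons a' b') →
    (a ∈ P.cl (Set.range b) ↔ a' ∈ P.cl (Set.range b'))

/-- QM2: infinite-dimensionality. -/
def QM2 : Prop := ∀ F : Finset M, P.cl ↑F ≠ Set.univ

/-- QM3: countable closure property. -/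
def QM3 : Prop := ∀ F : Finset M, (P.cl ↑F).Countable

/-- QM4: uniqueness of the generic type. -/
def QM4 : Prop :=
  ∀ (ι : Type) [Countable ι] (h h' : ι → M),
    P.cl (Set.range h) = Set.range h → P.cl (Set.range h') = Set.range h' →
    EqQF L h h' →
    ∀ a a' : M, a ∉ Set.range h → a' ∉ Set.range h' →
      EqQF L (Sum.elim h fun _ : Unit => a) (Sum.elim h' fun _ : Unit => a')

/-- QM5: ℵ₀-homogeneity over countable closed sets and the empty set. -/
def QM5 : Prop :=
  ∀ (ι : Type) [Countable ι] (h h' : ι → M) (n : ℕ) (b b' : Fin n → M),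
    (P.cl (Set.range h) = Set.range h ∨ Set.range h = ∅) →
    (P.cl (Set.range h') = Set.range h' ∨ Set.range h' = ∅) →
    EqQF L (Sum.elim h b) (Sum.elim h' b') →
    ∀ a ∈ P.cl (Set.range h ∪ Set.range b),
      ∃ a' : M, EqQF L (Sum.elim (Sum.elim h b) fun _ : Unit => a)
        (Sum.elim (Sum.elim h' b') fun _ : Unit => a')

/-- A weakly quasiminimal pregeometry structure: QM1, QM3, QM4, QM5. -/
structure IsWQPS : Prop where
  qm1 : QM1 L M P
  qm3 : QM3 M P
  qm4 : QM4 L M P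
  qm5 : QM5 L M P

/-- A quasiminimal pregeometry structure: additionally QM2. -/
structure IsQPS extends IsWQPS L M P : Prop where
  qm2 : QM2 M P

/-- ℵ₀-homogeneity over the empty set. -/
def HomogEmpty : Prop :=
  ∀ (n m : ℕ) (b b' : Fin n → M), EqQF L b b' →
    ∀ a : Fin m → M, ∃ a' : Fin m → M, EqQF L (Sum.elim a b) (Sum.elim a' b')

/-- `tp(ā/B)` splits over `A`. -/
def SplitsOver (B A : Set M) {n : ℕ} (a : Fin n → M) : Prop :=
  ∃ (m : ℕ) (c d : Fin m → M), (∀ i, c i ∈ B) ∧ (∀ i, d i ∈ B) ∧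
    EqQFOver L A c d ∧ ¬ EqQFOver L (A ∪ Set.range a) c d

/-- `tp(b̄/B)` is s-isolated (for `b̄ ∈ cl B`). -/
def SIsolated (B : Set M) {n : ℕ} (b : Fin n → M) : Prop :=
  ∃ A₀ : Finset M, ↑A₀ ⊆ B ∧
    ∀ b' : Fin n → M, (∀ i, b' i ∈ P.cl B) →
      EqQFOver L (↑A₀ : Set M) b' b → EqQFOver L B b' b

section EqQF

variable {L M} {α β : Type*}

theorem EqQF.refl (a : α → M) : EqQF L a a := fun _ _ => Iff.rfl

theorem EqQF.symm {a b : α → M} (h : EqQF L a b) : EqQF L b a := fun φ hφ => (h φ hφ).symm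

theorem EqQF.comp {a b : α → M} (h : EqQF L a b) (σ : β → α) : EqQF L (a ∘ σ) (b ∘ σ) :=
  fun φ hφ => by
    simpa only [Language.Formula.realize_relabel] using h (φ.relabel σ) (hφ.relabel _)

theorem EqQF.relabel {a b : α → M} {a' b' : β → M} (h : EqQF L a b) (σ : β → α)
    (ha : ∀ x, a' x = a (σ x)) (hb : ∀ x, b' x = b (σ x)) : EqQF L a' b' := by
  rw [show a' = a ∘ σ from funext ha, show b' = b ∘ σ from funext hb]
  exact h.comp σ

theorem realize_iff_of_eqOn_freeVarFinset [DecidableEq α] (φ : L.Formula α) {v w : α → M}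
    (h : ∀ x ∈ φ.freeVarFinset, v x = w x) : φ.Realize v ↔ φ.Realize w := by
  have hvw : (v ∘ (↑) : φ.freeVarFinset → M) = w ∘ (↑) := funext fun x => h x x.2
  unfold Language.Formula.Realize
  rw [← Language.BoundedFormula.realize_restrictFreeVar (f := id) (v := v ∘ (↑)) v fun _ => rfl,
    ← Language.BoundedFormula.realize_restrictFreeVar (f := id) (v := w ∘ (↑)) w fun _ => rfl, hvw]

/-- A formula mentions only finitely many variables. -/
theorem EqQF.sumElim_of_forall_fin {c c' : α → M} {u v : ℕ → M}
    (h : ∀ N, EqQF L (Sum.elim c fun i : Fin N => u i) (Sum.elim c' fun i : Fin N => v i)) :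
    EqQF L (Sum.elim c u) (Sum.elim c' v) := by
  classical
  intro φ hφ
  set N := φ.freeVarFinset.sup (Sum.elim 0 id)
  have hlt : ∀ n, Sum.inr n ∈ φ.freeVarFinset → n % (N + 1) = n := fun n hn =>
    Nat.mod_eq_of_lt (Nat.lt_succ_of_le (Finset.le_sup (f := Sum.elim 0 id) hn))
  let ρ : α ⊕ ℕ → α ⊕ Fin (N + 1) := Sum.map id (Fin.ofNat (N + 1))
  have hρ : ∀ (d : α → M) (s : ℕ → M), ∀ x ∈ φ.freeVarFinset,
      Sum.elim d s x = ((Sum.elim d fun i : Fin (N + 1) => s i) ∘ ρ) x := by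
    rintro d s (x | n) hx
    · rfl
    · simp [ρ, hlt n hx]
  rw [realize_iff_of_eqOn_freeVarFinset φ (hρ c u), realize_iff_of_eqOn_freeVarFinset φ (hρ c' v)]
  exact (h (N + 1)).comp ρ φ hφ

end EqQF

namespace Pregeom

variable {W : Type*} (G : Pregeom W)

theorem cl_subset_cl_of_subset_cl {A B : Set W} (h : A ⊆ G.cl B) : G.cl A ⊆ G.cl B :=
  G.cl_idem B ▸ G.mono h

theorem range_sumElim_eq_cl {α β : Type*} {b : α → W} {u : β → W}
    (hu : range u = G.cl (range b)) : range (Sum.elim b u) = G.cl (range b) := by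
  rw [Set.Sum.elim_range, hu, Set.union_eq_right.mpr (G.subset_cl _)]

/-- The Steinitz exchange lemma, relative to a base set `A`. -/
theorem card_le_card_of_subset_cl_union [DecidableEq W] (T : Finset W) :
    ∀ (A : Set W) (S : Finset W), (∀ x ∈ S, x ∉ G.cl (A ∪ ↑(S.erase x))) →
      ↑S ⊆ G.cl (A ∪ ↑T) → S.card ≤ T.card := by
  induction T using Finset.induction_on with
  | empty =>
    intro A S hS hST
    suffices S = ∅ by simp [this]
    refine Finset.eq_empty_of_forall_notMem fun x hx => hS x hx ?_
    exact G.mono Set.subset_union_left (by simpa using hST hx)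
  | insert t T htT ih =>
    intro A S hS hST
    by_cases hspan : ↑S ⊆ G.cl (A ∪ ↑T)
    · exact (ih A S hS hspan).trans (Finset.card_le_card (Finset.subset_insert t T))
    obtain ⟨s, hsS, hs⟩ := Set.not_subset.mp hspan
    -- exchanging `t` for `s` keeps the span
    have ht : t ∈ G.cl (insert s A ∪ ↑T) := by
      rw [Set.insert_union]
      refine G.exchange _ s t ?_ hs
      simpa [Set.insert_union, Set.union_insert] using hST hsS
    have hspan' : ↑(S.erase s) ⊆ G.cl (insert s A ∪ ↑T) := by
      refine (Finset.coe_subset.mpr (Finset.erase_subset s S)).trans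
        (hST.trans (G.cl_subset_cl_of_subset_cl ?_))
      rw [Finset.coe_insert, Set.union_insert, Set.insert_subset_iff]
      exact ⟨ht, (Set.union_subset_union_left _ (Set.subset_insert s A)).trans (G.subset_cl _)⟩
    have hindep : ∀ x ∈ S.erase s, x ∉ G.cl (insert s A ∪ ↑((S.erase s).erase x)) := by
      intro x hx
      have hxs := Finset.ne_of_mem_erase hx
      have hset : insert s A ∪ ↑((S.erase s).erase x) = A ∪ ↑(S.erase x) := by
        ext y
        simp only [Set.mem_union, Set.mem_insert_iff, Finset.coe_erase, Set.mem_sdiff,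
          Finset.mem_coe, Set.mem_singleton_iff]
        grind
      exact hset ▸ hS x (Finset.mem_of_mem_erase hx)
    have := ih (insert s A) (S.erase s) hindep hspan'
    rw [Finset.card_insert_of_notMem htT]
    rw [Finset.card_erase_of_mem hsS] at this
    omega

theorem exists_indep_subset_subset_cl [DecidableEq W] (F : Finset W) :
    ∃ I ⊆ F, Indep W G ↑I ∧ ↑F ⊆ G.cl ↑I := by
  induction F using Finset.strongInduction with
  | H F ih =>
    by_cases hF : Indep W G ↑F
    · exact ⟨F, subset_rfl, hF, G.subset_cl _⟩
    obtain ⟨y, hyF, hy⟩ : ∃ y ∈ F, y ∈ G.cl (↑F \ {y}) := by simpa [Indep] using hF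
    obtain ⟨I, hIF, hI, hFI⟩ := ih (F.erase y) (Finset.erase_ssubset hyF)
    refine ⟨I, hIF.trans (Finset.erase_subset y F), hI, fun z hz => ?_⟩
    by_cases hzy : z = y
    · rw [← Finset.coe_erase] at hy
      exact G.cl_subset_cl_of_subset_cl hFI (hzy ▸ hy)
    · exact hFI (Finset.mem_erase.mpr ⟨hzy, hz⟩)

end Pregeom

section Indep

variable {W : Type*} {G : Pregeom W}

theorem Indep.card_le [DecidableEq W] {S T : Finset W} (hS : Indep W G ↑S)
    (hST : ↑S ⊆ G.cl ↑T) : S.card ≤ T.card :=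
  G.card_le_card_of_subset_cl_union T ∅ S (fun x hx => by simpa using hS x hx) (by simpa using hST)

theorem Indep.insert {S : Set W} (hS : Indep W G S) {x : W} (hx : x ∉ G.cl S) :
    Indep W G (insert x S) := by
  have hxS : x ∉ S := fun h => hx (G.subset_cl S h)
  rintro y (rfl | hy)
  · simpa [hxS] using hx
  · have hyx : y ≠ x := fun h => hxS (h ▸ hy)
    intro hycl
    rw [Set.insert_sdiff_of_notMem S (Set.notMem_singleton_iff.mpr hyx.symm)] at hycl
    refine hx (G.mono (fun z hz => ?_) (G.exchange _ y x hycl (hS y hy)))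
    rcases hz with rfl | hz
    exacts [hy, hz.1]

end Indep

theorem exists_seq_of_forall_snoc {W : Type*} (Q : ∀ N, (Fin N → W) → Prop) (R : ℕ → W → Prop)
    (h0 : Q 0 Fin.elim0) (hstep : ∀ N p, Q N p → ∃ w, R N w ∧ Q (N + 1) (Fin.snoc p w)) :
    ∃ u : ℕ → W, (∀ n, R n (u n)) ∧ ∀ N, Q N fun i => u i := by
  let p : ∀ N, {q : Fin N → W // Q N q} := fun N =>
    Nat.rec ⟨Fin.elim0, h0⟩ (fun N q => ⟨_, (hstep N q.1 q.2).choose_spec.2⟩) N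
  let u : ℕ → W := fun n => (hstep n (p n).1 (p n).2).choose
  have hpu : ∀ N, (p N).1 = fun i : Fin N => u i := fun N => by
    induction N with
    | zero => exact funext fun i => i.elim0
    | succ N ih =>
      funext i
      induction i using Fin.lastCases with
      | last => exact Fin.snoc_last (α := fun _ => W) _ _
      | cast j => exact (Fin.snoc_castSucc (α := fun _ => W) _ _ _).trans (congrFun ih j)
  exact ⟨u, fun n => (hstep n (p n).1 (p n).2).choose_spec.1, fun N => hpu N ▸ (p N).2⟩

section WeaklyQuasiminimal

variable {L M P}

theorem mem_cl_iff_of_eqQF (h1 : QM1 L M P) {α : Type*} [Finite α] {b b' : α → M} {x x' : M}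
    (h : EqQF L (Sum.elim b fun _ : Unit => x) (Sum.elim b' fun _ : Unit => x')) :
    x ∈ P.cl (range b) ↔ x' ∈ P.cl (range b') := by
  obtain ⟨n, ⟨e⟩⟩ := Finite.exists_equiv_fin α
  have hcons : EqQF L (Fin.cons x (b ∘ e.symm)) (Fin.cons x' (b' ∘ e.symm)) :=
    h.relabel (Fin.cons (Sum.inr ()) (Sum.inl ∘ e.symm)) (Fin.cases rfl fun _ => rfl)
      (Fin.cases rfl fun _ => rfl)
  simpa only [e.symm.surjective.range_comp] using h1 n x x' _ _ hcons

theorem exists_eqQF_extend_of_mem_cl (h5 : QM5 L M P) {α : Type*} [Finite α] {b b' : α → M}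
    (hb : EqQF L b b') {x : M} (hx : x ∈ P.cl (range b)) :
    ∃ x', EqQF L (Sum.elim b fun _ : Unit => x) (Sum.elim b' fun _ : Unit => x') := by
  obtain ⟨n, ⟨e⟩⟩ := Finite.exists_equiv_fin α
  have hempty : range (Empty.elim : Empty → M) = ∅ := Set.range_eq_empty _
  obtain ⟨x', hx'⟩ := h5 Empty Empty.elim Empty.elim n (b ∘ e.symm) (b' ∘ e.symm)
    (Or.inr hempty) (Or.inr hempty)
    (hb.relabel (Sum.elim Empty.elim e.symm) (Sum.rec (fun e => e.elim) fun _ => rfl)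
      (Sum.rec (fun e => e.elim) fun _ => rfl)) x
    (by rwa [hempty, Set.empty_union, e.symm.surjective.range_comp])
  exact ⟨x', hx'.relabel (Sum.map (Sum.inr ∘ e) id) (by rintro (i | ⟨⟩) <;> simp)
    (by rintro (i | ⟨⟩) <;> simp)⟩

theorem exists_eqQF_snoc_of_mem_cl (h1 : QM1 L M P) (h5 : QM5 L M P) {α : Type*} [Finite α]
    {N : ℕ} {b b' : α → M} {u v : Fin N → M} (h : EqQF L (Sum.elim b u) (Sum.elim b' v)) {z : M}
    (hz : z ∈ P.cl (range b)) :
    ∃ z' ∈ P.cl (range b'), EqQF L (Sum.elim b (Fin.snoc u z)) (Sum.elim b' (Fin.snoc v z')) := by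
  obtain ⟨z', hz'⟩ := exists_eqQF_extend_of_mem_cl h5 h
    (P.mono (by rw [Set.Sum.elim_range]; exact Set.subset_union_left) hz)
  refine ⟨z', (mem_cl_iff_of_eqQF h1 (hz'.relabel (Sum.map Sum.inl id)
    (by rintro (_ | _) <;> rfl) (by rintro (_ | _) <;> rfl))).mp hz, ?_⟩
  refine hz'.relabel (Sum.elim (Sum.inl ∘ Sum.inl)
    (Fin.lastCases (Sum.inr ()) (Sum.inl ∘ Sum.inr))) ?_ ?_ <;>
  · rintro (i | i)
    · rfl
    · induction i using Fin.lastCases <;> simp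

/-- Back and forth along enumerations `e`, `e'` of the two closures: even steps take the next
element of `e`, odd steps the next element of `e'`. -/
theorem exists_eqQF_enum_cl (h1 : QM1 L M P) (h3 : QM3 M P) (h5 : QM5 L M P) {α : Type*}
    [Finite α] [Nonempty α] {b b' : α → M} (hb : EqQF L b b') :
    ∃ u v : ℕ → M, range u = P.cl (range b) ∧ range v = P.cl (range b') ∧
      EqQF L (Sum.elim b u) (Sum.elim b' v) := by
  classical
  have := Fintype.ofFinite α
  have hcount (c : α → M) : (P.cl (range c)).Countable := by
    simpa using h3 (Finset.univ.image c)
  have hne (c : α → M) : (P.cl (range c)).Nonempty :=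
    ⟨_, P.subset_cl _ (mem_range_self (Classical.arbitrary α))⟩
  obtain ⟨e, he⟩ := (hcount b).exists_eq_range (hne b)
  obtain ⟨e', he'⟩ := (hcount b').exists_eq_range (hne b')
  let Q : ∀ N, (Fin N → M × M) → Prop := fun _ p =>
    EqQF L (Sum.elim b (Prod.fst ∘ p)) (Sum.elim b' (Prod.snd ∘ p))
  let R : ℕ → M × M → Prop := fun n w => w.1 ∈ P.cl (range b) ∧ w.2 ∈ P.cl (range b') ∧
    (Even n → w.1 = e (n / 2)) ∧ (¬Even n → w.2 = e' (n / 2))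
  have hstep : ∀ N p, Q N p → ∃ w, R N w ∧ Q (N + 1) (Fin.snoc p w) := by
    intro N p hp
    by_cases hN : Even N
    · obtain ⟨z', hz', h⟩ := exists_eqQF_snoc_of_mem_cl h1 h5 hp (he ▸ mem_range_self (N / 2))
      refine ⟨(e (N / 2), z'), ⟨he ▸ mem_range_self _, hz', fun _ => rfl, absurd hN⟩, ?_⟩
      simpa only [Q, Fin.comp_snoc] using h
    · obtain ⟨z, hz, h⟩ :=
        exists_eqQF_snoc_of_mem_cl h1 h5 hp.symm (he' ▸ mem_range_self (N / 2))
      refine ⟨(z, e' (N / 2)), ⟨hz, he' ▸ mem_range_self _, fun h => absurd h hN, fun _ => rfl⟩, ?_⟩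
      simpa only [Q, Fin.comp_snoc] using h.symm
  obtain ⟨w, hwR, hwQ⟩ := exists_seq_of_forall_snoc Q R
    (hb.relabel (Sum.elim id Fin.elim0) (Sum.rec (fun _ => rfl) fun i => i.elim0)
      (Sum.rec (fun _ => rfl) fun i => i.elim0)) hstep
  refine ⟨Prod.fst ∘ w, Prod.snd ∘ w, ?_, ?_, EqQF.sumElim_of_forall_fin hwQ⟩
  · refine (range_subset_iff.mpr fun n => (hwR n).1).antisymm ?_
    rw [he]
    rintro _ ⟨i, rfl⟩
    exact ⟨2 * i, by simpa using (hwR (2 * i)).2.2.1 (even_two_mul i)⟩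
  · refine (range_subset_iff.mpr fun n => (hwR n).2.1).antisymm ?_
    rw [he']
    rintro _ ⟨i, rfl⟩
    have hodd : ¬Even (2 * i + 1) := by simp
    exact ⟨2 * i + 1, by simpa [Nat.add_div_of_dvd_right] using (hwR (2 * i + 1)).2.2.2 hodd⟩

theorem exists_notMem_cl_of_eqQF (h1 : QM1 L M P) {α : Type*} [Finite α] {b b' : α → M}
    (hb : EqQF L b b') {x : M} (hx : x ∉ P.cl (range b)) : ∃ x', x' ∉ P.cl (range b') := by
  classical
  have := Fintype.ofFinite α
  obtain ⟨I, hIb, hI, hbI⟩ := P.exists_indep_subset_subset_cl (Finset.univ.image b)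
  choose g hg using fun y : I => by simpa using hIb y.2
  have hbg : range (b ∘ g) = ↑I := by
    ext y
    simp only [mem_range, Function.comp_apply, hg, Finset.mem_coe]
    exact ⟨by rintro ⟨⟨z, hz⟩, rfl⟩; exact hz, fun hy => ⟨⟨y, hy⟩, rfl⟩⟩
  have hspan : range b' ⊆ P.cl (range (b' ∘ g)) := by
    rintro _ ⟨j, rfl⟩
    have hj : EqQF L (Sum.elim (b ∘ g) fun _ : Unit => b j) (Sum.elim (b' ∘ g) fun _ => b' j) :=
      hb.relabel (Sum.elim g fun _ => j) (by rintro (_ | _) <;> rfl) (by rintro (_ | _) <;> rfl)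
    exact (mem_cl_iff_of_eqQF h1 hj).mp (hbg ▸ hbI (by simp))
  by_contra! hall
  have hxI : x ∉ P.cl ↑I := fun h =>
    hx (P.mono (by simpa using Finset.coe_subset.mpr hIb) h)
  have hindep : Indep M P ↑(insert x I) := by
    rw [Finset.coe_insert]
    exact hI.insert hxI
  have hcard := hindep.card_le (T := Finset.univ.image (b' ∘ g)) <| by
    rw [Finset.coe_image, Finset.coe_univ, Set.image_univ]
    exact fun y _ => P.cl_subset_cl_of_subset_cl hspan (hall y)
  rw [Finset.card_insert_of_notMem fun h => hxI (P.subset_cl _ h)] at hcard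
  have := Finset.card_image_le (s := Finset.univ) (f := b' ∘ g)
  simp only [Finset.card_univ, Fintype.card_coe] at this
  omega

theorem exists_eqQF_extend (hW : IsWQPS L M P) {α : Type} [Finite α] {b b' : α → M}
    (hb : EqQF L b b') (x : M) :
    ∃ x', EqQF L (Sum.elim b fun _ : Unit => x) (Sum.elim b' fun _ : Unit => x') := by
  by_cases hx : x ∈ P.cl (range b)
  · exact exists_eqQF_extend_of_mem_cl hW.qm5 hb hx
  cases isEmpty_or_nonempty α
  · exact ⟨x, Subsingleton.elim b b' ▸ EqQF.refl _⟩
  obtain ⟨u, v, hu, hv, huv⟩ := exists_eqQF_enum_cl hW.qm1 hW.qm3 hW.qm5 hb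
  obtain ⟨x', hx'⟩ := exists_notMem_cl_of_eqQF hW.qm1 hb hx
  have hH := P.range_sumElim_eq_cl hu
  have hH' := P.range_sumElim_eq_cl hv
  have h4 := hW.qm4 (α ⊕ ℕ) _ _ (by rw [hH, P.cl_idem]) (by rw [hH', P.cl_idem]) huv x x'
    (hH ▸ hx) (hH' ▸ hx')
  exact ⟨x', h4.relabel (Sum.map Sum.inl id) (by rintro (_ | _) <;> rfl)
    (by rintro (_ | _) <;> rfl)⟩

end WeaklyQuasiminimal

/-- every weakly quasiminimal pregeometry structure is
ℵ₀-homogeneous over the empty set. -/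
theorem homogeneity_over_emptyset (L : FirstOrder.Language) (M : Type*) [L.Structure M]
    (P : Pregeom M) (h : IsWQPS L M P) : HomogEmpty L M := by
  intro n m b b' hb a
  induction m with
  | zero =>
    exact ⟨a, hb.relabel (Sum.elim Fin.elim0 id) (by rintro (i | j); exacts [i.elim0, rfl])
      (by rintro (i | j); exacts [i.elim0, rfl])⟩
  | succ m ih =>
    obtain ⟨a₀, ha₀⟩ := ih (Fin.tail a)
    obtain ⟨x', hx'⟩ := exists_eqQF_extend h ha₀ (a 0)
    refine ⟨Fin.cons x' a₀, hx'.relabel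
      (Sum.elim (Fin.cases (Sum.inr ()) (Sum.inl ∘ Sum.inl)) (Sum.inl ∘ Sum.inr)) ?_ ?_⟩ <;>
    · rintro (i | j)
      · induction i using Fin.cases <;> rfl
      · rfl

end QM
end

section
/- There exists a weakly quasiminimal pregeometry structure 𝔐 in the language of a single equivalence relation, with ℵ₀ equivalence classes each of size ℵ₀ and cl(A) defined as the union of the equivalence classes meeting A, together with an infinite non-closed subset M ⊆ 𝔐 and finite tuples ā, b̄ ∈ 𝔐 with b̄ ∈ cl(M ā), such that tp(b̄/M ∪ ā) is not s-isolated. -/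
open FirstOrder Set

namespace QM

variable (L : FirstOrder.Language) (M : Type*) [L.Structure M] (P : Pregeom M)

/-! In `ℕ × ℕ` with `x E y ↔ x.1 = y.1` there are no function symbols, so the
quantifier-free type of a tuple is exactly its equality pattern together with its pattern of
`E`-classes. The QM axioms follow from this description, the infinite classes supplying the
new points that homogeneity asks for. Let `M₀` be a class minus one point `c`. A finite
`A₀ ⊆ M₀` misses some `d ∈ M₀`, and `d` has the same type as `c` over `A₀`; over `M₀`,
however, `x = d` separates them, so `tp(c/M₀)` is not s-isolated. -/

open FirstOrder.Language

section KernelStructure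

variable {α β : Type*}

abbrev kerStructure (κ : α → β) : Language.graph.Structure α where
  RelMap | .adj => fun v => κ (v 0) = κ (v 1)

def AdjIsKernel [Language.graph.Structure α] (κ : α → β) : Prop :=
  ∀ v : Fin 2 → α, Structure.RelMap Language.adj v ↔ κ (v 0) = κ (v 1)

def SameConfig (κ : α → β) {ι : Type*} (a b : ι → α) : Prop :=
  (∀ i j, a i = a j ↔ b i = b j) ∧ (∀ i j, κ (a i) = κ (a j) ↔ κ (b i) = κ (b j))

variable {κ : α → β}

namespace SameConfig

variable {ι : Type*} {u v : ι → α}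

protected lemma rfl : SameConfig κ u u := ⟨fun _ _ => Iff.rfl, fun _ _ => Iff.rfl⟩

lemma comp (h : SameConfig κ u v) {ι' : Type*} (σ : ι' → ι) :
    SameConfig κ (u ∘ σ) (v ∘ σ) :=
  ⟨fun i j => h.1 (σ i) (σ j), fun i j => h.2 (σ i) (σ j)⟩

lemma snoc (h : SameConfig κ u v) {γ : Type*} {x y : α} (he : ∀ i, x = u i ↔ y = v i)
    (hc : ∀ i, κ x = κ (u i) ↔ κ y = κ (v i)) :
    SameConfig κ (Sum.elim u fun _ : γ => x) (Sum.elim v fun _ : γ => y) := by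
  constructor
  · rintro (i | i) (j | j)
    · exact h.1 i j
    · simpa [eq_comm] using he i
    · exact he j
    · simp
  · rintro (i | i) (j | j)
    · exact h.2 i j
    · simpa [eq_comm] using hc i
    · exact hc j
    · simp

lemma snoc_self (h : SameConfig κ u v) (k : ι) {γ : Type*} :
    SameConfig κ (Sum.elim u fun _ : γ => u k) (Sum.elim v fun _ : γ => v k) :=
  h.snoc (h.1 k) (h.2 k)

lemma snoc_fresh (h : SameConfig κ u v) {γ : Type*} {x y : α} (hx : x ∉ range u)
    (hy : y ∉ range v) (hc : ∀ i, κ x = κ (u i) ↔ κ y = κ (v i)) :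
    SameConfig κ (Sum.elim u fun _ : γ => x) (Sum.elim v fun _ : γ => y) :=
  h.snoc (fun i => iff_of_false (fun e => hx ⟨i, e.symm⟩) (fun e => hy ⟨i, e.symm⟩)) hc

end SameConfig

def kerPregeom (κ : α → β) : Pregeom α where
  cl A := κ ⁻¹' (κ '' A)
  subset_cl A := subset_preimage_image κ A
  mono _ _ h := preimage_mono (image_mono h)
  cl_idem _ := preimage_image_preimage
  finChar := by
    rintro A x ⟨z, hz, hzx⟩
    exact ⟨{z}, by simpa using hz, z, by simp, hzx⟩
  exchange := by
    rintro A a c ⟨x, rfl | hx, hxa⟩ ha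
    · exact ⟨a, mem_insert a A, hxa.symm⟩
    · exact absurd ⟨x, hx, hxa⟩ ha

lemma mem_kerPregeom_cl {A : Set α} {x : α} :
    x ∈ (kerPregeom κ).cl A ↔ ∃ y ∈ A, κ y = κ x := Iff.rfl

lemma ker_ne_of_cl_eq_self {A : Set α} (hA : (kerPregeom κ).cl A = A) {x y : α} (hx : x ∉ A)
    (hy : y ∈ A) : κ x ≠ κ y :=
  fun h => hx (hA ▸ ⟨y, hy, h.symm⟩)

lemma mem_kerPregeom_cl_fiber_diff {c : α} (hc : (κ ⁻¹' {κ c}).Infinite) :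
    c ∈ (kerPregeom κ).cl (κ ⁻¹' {κ c} \ {c}) :=
  let ⟨d, hd⟩ := (hc.sdiff (finite_singleton c)).nonempty
  ⟨d, hd, hd.1⟩

lemma kerPregeom_cl_fiber_diff_ne {c : α} (hc : (κ ⁻¹' {κ c}).Infinite) :
    (kerPregeom κ).cl (κ ⁻¹' {κ c} \ {c}) ≠ κ ⁻¹' {κ c} \ {c} :=
  fun h => (h ▸ mem_kerPregeom_cl_fiber_diff hc).2 rfl

lemma qm3_kerPregeom [Countable α] : QM3 α (kerPregeom κ) :=
  fun _ => Set.to_countable _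

variable [Language.graph.Structure α]

lemma graph_term_realize_eq_var {ι : Type*} (t : Language.graph.Term (ι ⊕ Fin 0)) :
    ∃ i, ∀ (a : ι → α) (xs : Fin 0 → α), t.realize (Sum.elim a xs) = a i := by
  rcases t with (i | k) | ⟨f, _⟩
  · exact ⟨i, fun _ _ => rfl⟩
  · exact k.elim0
  · exact isEmptyElim f

lemma eqQF_iff_sameConfig (hκ : AdjIsKernel κ) {ι : Type*} {a b : ι → α} :
    EqQF Language.graph a b ↔ SameConfig κ a b := by
  refine ⟨fun h => ⟨fun i j => ?_, fun i j => ?_⟩, fun h φ hφ => ?_⟩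
  · simpa using h ((Term.var i).equal (Term.var j)) (BoundedFormula.IsAtomic.equal _ _).isQF
  · have := h (Language.adj.formula₂ (Term.var i) (Term.var j))
      (BoundedFormula.IsAtomic.rel _ _).isQF
    simp only [Formula.realize_rel₂, Term.realize_var] at this
    exact (hκ _).symm.trans (this.trans (hκ _))
  induction hφ with
  | falsum => exact Iff.rfl
  | of_isAtomic hat =>
    cases hat with
    | equal t₁ t₂ =>
      obtain ⟨i, hi⟩ := graph_term_realize_eq_var (α := α) t₁
      obtain ⟨j, hj⟩ := graph_term_realize_eq_var (α := α) t₂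
      simp only [Formula.Realize, BoundedFormula.realize_bdEqual, hi, hj]
      exact h.1 i j
    | rel R ts =>
      choose c hc using fun k => graph_term_realize_eq_var (α := α) (ts k)
      simp only [Formula.Realize, BoundedFormula.realize_rel, hc]
      cases R
      exact (hκ (a ∘ c)).trans ((h.2 _ _).trans (hκ (b ∘ c)).symm)
  | imp _ _ ih₁ ih₂ => exact imp_congr ih₁ ih₂

lemma qm1_kerPregeom (hκ : AdjIsKernel κ) : QM1 Language.graph α (kerPregeom κ) := by
  intro n a a' b b' h
  have hcls := ((eqQF_iff_sameConfig hκ).1 h).2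
  simp only [mem_kerPregeom_cl, exists_range_iff]
  exact exists_congr fun i => by simpa using hcls i.succ 0

lemma qm4_kerPregeom (hκ : AdjIsKernel κ) : QM4 Language.graph α (kerPregeom κ) := by
  intro ι _ h h' hcl hcl' hh a a' ha ha'
  have hp := (eqQF_iff_sameConfig hκ).1 hh
  refine (eqQF_iff_sameConfig hκ).2 (hp.snoc_fresh ha ha' fun i => ?_)
  exact iff_of_false (ker_ne_of_cl_eq_self hcl ha (mem_range_self i))
    (ker_ne_of_cl_eq_self hcl' ha' (mem_range_self i))

lemma qm5_kerPregeom (hκ : AdjIsKernel κ) (hfib : ∀ x, (κ ⁻¹' {κ x}).Infinite) :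
    QM5 Language.graph α (kerPregeom κ) := by
  intro ι _ h h' n b b' hcl _ hbb' a ha
  have hp := (eqQF_iff_sameConfig hκ).1 hbb'
  rw [← Set.Sum.elim_range] at ha
  by_cases hmem : a ∈ range (Sum.elim h b)
  · obtain ⟨k, rfl⟩ := hmem
    exact ⟨_, (eqQF_iff_sameConfig hκ).2 (hp.snoc_self k)⟩
  -- `a` is new, so it lies in the class of some `b j`, which is not the class of any `h i`.
  have hah : ∀ i, κ (h i) ≠ κ a := by
    intro i hi
    rcases hcl with hcl | hcl
    · exact ker_ne_of_cl_eq_self hcl (fun ⟨k, hk⟩ => hmem ⟨.inl k, hk⟩) (mem_range_self i)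
        hi.symm
    · exact (hcl ▸ mem_range_self i : h i ∈ (∅ : Set α))
  obtain ⟨_, ⟨j | j, rfl⟩, hj⟩ := ha
  · exact absurd hj (hah j)
  obtain ⟨a', ha'j, ha'b⟩ := (hfib (b' j)).exists_notMem_finite (finite_range b')
  have hcls : ∀ k, κ a = κ (Sum.elim h b k) ↔ κ a' = κ (Sum.elim h' b' k) := by
    intro k
    rw [← hj, ha'j]
    exact hp.2 (.inr j) k
  refine ⟨a', (eqQF_iff_sameConfig hκ).2 (hp.snoc_fresh hmem ?_ hcls)⟩
  rintro ⟨i | i, rfl⟩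
  · exact hah i ((hcls (.inl i)).2 rfl).symm
  · exact ha'b (mem_range_self i)

lemma isWQPS_kerPregeom [Countable α] (hκ : AdjIsKernel κ)
    (hfib : ∀ x, (κ ⁻¹' {κ x}).Infinite) : IsWQPS Language.graph α (kerPregeom κ) :=
  ⟨qm1_kerPregeom hκ, qm3_kerPregeom, qm4_kerPregeom hκ, qm5_kerPregeom hκ hfib⟩

lemma not_sIsolated_fiber_diff (hκ : AdjIsKernel κ) {c : α} (hc : (κ ⁻¹' {κ c}).Infinite) :
    ¬ SIsolated Language.graph α (kerPregeom κ) (κ ⁻¹' {κ c} \ {c})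
      (fun _ : Fin 1 => c) := by
  rintro ⟨A₀, hA₀, hiso⟩
  obtain ⟨d, hdc, hdA₀⟩ := hc.exists_notMem_finite (A₀.finite_toSet.insert c)
  have hd : d ∈ κ ⁻¹' {κ c} \ {c} := ⟨hdc, fun h => hdA₀ (.inl h)⟩
  -- Over `A₀`, the point `d` looks exactly like `c`; over the fibre, `d` names itself.
  have hdc_A₀ : EqQFOver Language.graph (A₀ : Set α) (fun _ : Fin 1 => d) (fun _ => c) := by
    intro m e he
    have hfresh := (SameConfig.rfl (κ := κ) (u := e)).snoc_fresh (γ := Fin 1) (x := d) (y := c)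
      (by rintro ⟨i, rfl⟩; exact hdA₀ (.inr (he i)))
      (by rintro ⟨i, hi⟩; exact (hA₀ (he i)).2 hi)
      (fun i => by rw [hdc, (hA₀ (he i)).1])
    simpa [eqQF_iff_sameConfig hκ] using hfresh.comp Sum.swap
  have hdc_fibre := hiso _ (fun _ => ⟨d, hd, rfl⟩) hdc_A₀ 1 (fun _ => d) (fun _ => hd)
  exact hd.2 (((eqQF_iff_sameConfig hκ).1 hdc_fibre).1 (.inl 0) (.inr 0) |>.1 rfl).symm

end KernelStructure

/-- in the language of one equivalence relation there is a weakly
quasiminimal pregeometry structure with ℵ₀ classes of size ℵ₀ (witnessed by a bijection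
with `ℕ × ℕ` identifying the classes with the fibres of the first coordinate), whose
closure is the union of classes meeting the set, together with an infinite non-closed
`M₀ ⊆ 𝔐` and tuples `ā`, `b̄ ∈ cl(M₀ ā)` such that `tp(b̄/M₀ ∪ ā)` is not s-isolated. -/
theorem s_isolation_fails_over_nonclosed_sets :
    ∃ (M : Type) (_S : FirstOrder.Language.graph.Structure M) (P : Pregeom M)
      (f : M ≃ ℕ × ℕ),
      (∀ x y : M,
        @FirstOrder.Language.Structure.RelMap FirstOrder.Language.graph M _S 2
          FirstOrder.Language.adj ![x, y] ↔ (f x).1 = (f y).1) ∧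
      (∀ A : Set M, P.cl A = {y | ∃ x ∈ A, (f x).1 = (f y).1}) ∧
      @IsWQPS FirstOrder.Language.graph M _S P ∧
      ∃ (M₀ : Set M) (na nb : ℕ) (a : Fin na → M) (b : Fin nb → M),
        M₀.Infinite ∧ P.cl M₀ ≠ M₀ ∧
        (∀ i, b i ∈ P.cl (M₀ ∪ Set.range a)) ∧
        ¬ @SIsolated FirstOrder.Language.graph M _S P (M₀ ∪ Set.range a) nb b := by
  let := kerStructure (Prod.fst : ℕ × ℕ → ℕ)
  have hκ : AdjIsKernel (Prod.fst : ℕ × ℕ → ℕ) := fun _ => Iff.rfl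
  have hfib : ∀ x : ℕ × ℕ, (Prod.fst ⁻¹' {x.1}).Infinite := fun x =>
    infinite_of_injective_forall_mem (Prod.mk_right_injective (β := ℕ) x.1) fun _ => rfl
  have hfib₀ := hfib (0, 0)
  refine ⟨ℕ × ℕ, inferInstance, kerPregeom Prod.fst, Equiv.refl _, fun _ _ => Iff.rfl,
    fun _ => rfl, isWQPS_kerPregeom hκ hfib, Prod.fst ⁻¹' {0} \ {(0, 0)}, 0, 1, Fin.elim0,
    fun _ => (0, 0), hfib₀.sdiff (finite_singleton _), kerPregeom_cl_fiber_diff_ne hfib₀, ?_⟩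
  simp only [range_eq_empty, union_empty]
  exact ⟨fun _ => mem_kerPregeom_cl_fiber_diff hfib₀, not_sIsolated_fiber_diff hκ hfib₀⟩

end QM
end

section
/- Let M be an uncountable quasiminimal pregeometry structure with pregeometry cl. Then M is a quasiminimal structure, and cl = cl_p where p is the generic type: for finite B ⊆ M and a ∈ M, a ∉ cl(B) iff a realizes the type over B consisting of formulas φ(x, b̄) with φ(M, b̄) co-countable; equivalently, for every formula φ and finite b̄ ∈ M, φ(M, b̄) is countable iff φ(x, b̄) fails in all elements outside cl(b̄). -/
open FirstOrder Set

namespace QM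

variable (L : FirstOrder.Language) (M : Type*) [L.Structure M] (P : Pregeom M)

/-- The solution set `φ(M, b̄)` of a formula with parameters `b̄`. -/
def solSet (L : FirstOrder.Language) (M : Type*) [L.Structure M] {n : ℕ}
    (φ : L.Formula (Fin (n + 1))) (b : Fin n → M) : Set M :=
  {x : M | φ.Realize (Fin.cons x b)}

/-- `M` is quasiminimal: every definable subset (with parameters) is countable or
co-countable. -/
def Quasiminimal (L : FirstOrder.Language) (M : Type*) [L.Structure M] : Prop :=
  ∀ (n : ℕ) (φ : L.Formula (Fin (n + 1))) (b : Fin n → M),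
    (solSet L M φ b).Countable ∨ (solSet L M φ b)ᶜ.Countable

/-- The quasiminimal closure: `x ∈ cl_p A` iff `x` does not realize the generic
(co-countable) type over `A`, i.e. `x` satisfies some countable formula over `A`. -/
def clp (L : FirstOrder.Language) (M : Type*) [L.Structure M] (A : Set M) : Set M :=
  {x : M | ∃ (n : ℕ) (φ : L.Formula (Fin (n + 1))) (b : Fin n → M),
    (∀ i, b i ∈ A) ∧ (solSet L M φ b).Countable ∧ x ∈ solSet L M φ b}

/-- Equality of complete first-order types. -/
def EqFull (L : FirstOrder.Language) {M : Type*} [L.Structure M] {α : Type*}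
    (a b : α → M) : Prop :=
  ∀ φ : L.Formula α, φ.Realize a ↔ φ.Realize b

/-- Quantifier elimination for types realized in `M`: quantifier-free types determine
complete types. -/
def QEr (L : FirstOrder.Language) (M : Type*) [L.Structure M] : Prop :=
  ∀ (n : ℕ) (a b : Fin n → M), EqQF L a b → EqFull L a b


lemma cl_range_countable (h3 : QM3 M P) {n : ℕ} (b : Fin n → M) :
    (P.cl (Set.range b)).Countable := by
  have hfin : (Set.range b).Finite := Set.finite_range b
  have := h3 hfin.toFinset
  rwa [Set.Finite.coe_toFinset] at this

lemma generic_sameQF (h3 : QM3 M P) (h4 : QM4 L M P) {n : ℕ} (b : Fin n → M) {a a' : M}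
    (ha : a ∉ P.cl (Set.range b)) (ha' : a' ∉ P.cl (Set.range b)) :
    EqQF L (Fin.cons a b) (Fin.cons a' b) := by
  classical
  set C := P.cl (Set.range b) with hCdef
  have hCc : C.Countable := cl_range_countable M P h3 b
  have : Countable ↥C := hCc.to_subtype
  obtain ⟨f, hf⟩ := exists_injective_nat ↥C
  let e : ↥C ≃ Set.range f := Equiv.ofInjective f hf
  let h0 : ↥(Set.range f) → M := fun k => ((e.symm k : ↥C) : M)
  have hrange : Set.range h0 = C := by
    have h1 : Set.range h0 = Subtype.val '' Set.range e.symm := Set.range_comp _ _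
    rw [h1, e.symm.range_eq_univ, Set.image_univ, Subtype.range_coe]
  have hclosed : P.cl (Set.range h0) = Set.range h0 := by
    rw [hrange]; exact P.cl_idem _
  have E := h4 ↥(Set.range f) h0 h0 hclosed hclosed (fun φ _ => Iff.rfl) a a'
    (by rw [hrange]; exact ha) (by rw [hrange]; exact ha')
  have hb : ∀ i, ∃ k, h0 k = b i := by
    intro i
    have : b i ∈ Set.range h0 := by
      rw [hrange]; exact P.subset_cl _ (Set.mem_range_self i)
    exact this
  choose g hg using hb
  intro φ hφ
  let r : Fin (n + 1) → ↥(Set.range f) ⊕ Unit :=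
    Fin.cons (Sum.inr ()) (fun i => Sum.inl (g i))
  have key : ∀ x : M, (Sum.elim h0 (fun _ : Unit => x)) ∘ r = Fin.cons x b := by
    intro x
    funext j
    refine Fin.cases ?_ ?_ j
    · simp [r]
    · intro i; simp [r, hg]
  have hrel := E (φ.relabel r) (hφ.relabel _)
  rw [FirstOrder.Language.Formula.realize_relabel,
    FirstOrder.Language.Formula.realize_relabel, key a, key a'] at hrel
  exact hrel

/-- an uncountable quasiminimal pregeometry structure is a quasiminimal
structure, and its pregeometry is the quasiminimal closure `cl_p`: for finite `B`,
`a ∉ cl B` iff `a` realizes the generic type over `B`; equivalently `φ(M, b̄)` is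
countable iff `φ(x, b̄)` fails outside `cl(b̄)`. -/
theorem qps_is_quasiminimal (L : FirstOrder.Language) (M : Type*) [L.Structure M]
    [Uncountable M] (hqe : QEr L M) (P : Pregeom M) (h : IsQPS L M P) :
    Quasiminimal L M ∧
    (∀ A : Set M, A.Finite → ∀ a : M, (a ∈ P.cl A ↔ a ∈ clp L M A)) ∧
    ∀ (n : ℕ) (φ : L.Formula (Fin (n + 1))) (b : Fin n → M),
      ((solSet L M φ b).Countable ↔
        ∀ x : M, x ∉ P.cl (Set.range b) → x ∉ solSet L M φ b) := by

  classical
  -- same full type for generic elements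
  have sameFull : ∀ {n : ℕ} (b : Fin n → M) {a a' : M},
      a ∉ P.cl (Set.range b) → a' ∉ P.cl (Set.range b) → EqFull L (Fin.cons a b) (Fin.cons a' b) :=
    fun {n} b {a a'} ha ha' =>
      hqe (n + 1) _ _ (generic_sameQF L M P h.qm3 h.qm4 b ha ha')
  have dich : ∀ (n : ℕ) (φ : L.Formula (Fin (n + 1))) (b : Fin n → M),
      solSet L M φ b ⊆ P.cl (Set.range b) ∨ (solSet L M φ b)ᶜ ⊆ P.cl (Set.range b) := by
    intro n φ b
    by_cases hx : ∃ x, x ∉ P.cl (Set.range b) ∧ x ∈ solSet L M φ b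
    · right
      obtain ⟨x, hx1, hx2⟩ := hx
      intro y hy
      by_contra hyc
      exact hy ((sameFull b hx1 hyc φ).mp hx2)
    · left
      intro x hx2
      by_contra hx1
      exact hx ⟨x, hx1, hx2⟩
  have third : ∀ (n : ℕ) (φ : L.Formula (Fin (n + 1))) (b : Fin n → M),
      ((solSet L M φ b).Countable ↔
        ∀ x : M, x ∉ P.cl (Set.range b) → x ∉ solSet L M φ b) := by
    intro n φ b
    constructor
    · intro hc x hx hxs
      rcases dich n φ b with hd | hd
      · exact hx (hd hxs)
      · have h1 : ((solSet L M φ b)ᶜ).Countable :=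
          (cl_range_countable M P h.qm3 b).mono hd
        have h2 : (Set.univ : Set M).Countable := by
          rw [← Set.union_compl_self (solSet L M φ b)]
          exact hc.union h1
        exact Set.not_countable_univ h2
    · intro hall
      refine (cl_range_countable M P h.qm3 b).mono ?_
      intro x hxs
      by_contra hx
      exact hall x hx hxs
  refine ⟨?_, ?_, third⟩
  · intro n φ b
    rcases dich n φ b with hd | hd
    · exact Or.inl ((cl_range_countable M P h.qm3 b).mono hd)
    · exact Or.inr ((cl_range_countable M P h.qm3 b).mono hd)
  · intro A hA a
    constructor
    · intro haA
      by_contra hclp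
      obtain ⟨n, bemb, hbr⟩ := hA.fin_embedding
      set b : Fin n → M := ⇑bemb with hbdef
      have hbr' : Set.range b = A := hbr
      have hAne : P.cl A ≠ Set.univ := by
        have := h.qm2 hA.toFinset
        rwa [Set.Finite.coe_toFinset] at this
      obtain ⟨a', ha'⟩ := Set.ne_univ_iff_exists_notMem _ |>.mp hAne
      have hnc : ∀ (m : ℕ) (ψ : L.Formula (Fin (m + 1))) (c : Fin m → M),
          (∀ i, c i ∈ A) → a ∈ solSet L M ψ c → ¬ (solSet L M ψ c).Countable := by
        intro m ψ c hc hmem hcnt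
        exact hclp ⟨m, ψ, c, hc, hcnt, hmem⟩
      have hgen : ∀ (ψ : L.Formula (Fin (n + 1))), a ∈ solSet L M ψ b →
          ψ.Realize (Fin.cons a' b) := by
        intro ψ hmem
        have hnotc : ¬ (solSet L M ψ b).Countable :=
          hnc n ψ b (fun i => hbr' ▸ Set.mem_range_self i) hmem
        have : ¬ ∀ x : M, x ∉ P.cl (Set.range b) → x ∉ solSet L M ψ b :=
          fun hh => hnotc ((third n ψ b).mpr hh)
        push_neg at this
        obtain ⟨x, hx1, hx2⟩ := this
        have ha'b : a' ∉ P.cl (Set.range b) := by rw [hbr']; exact ha'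
        exact (sameFull b hx1 ha'b ψ).mp hx2
      have hqf : EqQF L (Fin.cons a b) (Fin.cons a' b) := by
        intro φ _
        constructor
        · intro hr
          exact hgen φ hr
        · intro hr'
          by_contra hr
          have hmem : a ∈ solSet L M φ.not b := by
            simpa [solSet, FirstOrder.Language.Formula.realize_not] using hr
          have := hgen φ.not hmem
          rw [FirstOrder.Language.Formula.realize_not] at this
          exact this hr'
      have := h.qm1 n a a' b b hqf
      rw [hbr'] at this
      exact ha' (this.mp haA)
    · intro haclp
      obtain ⟨n, φ, b, hbA, hcnt, hmem⟩ := haclp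
      have := (third n φ b).mp hcnt
      by_contra haA
      have hab : a ∉ P.cl (Set.range b) := by
        intro hc
        exact haA (P.mono (Set.range_subset_iff.mpr hbA) hc)
      exact this a hab hmem


end QM
end

section
/- The structure ω₁ × ℚ with the lexicographic order is quasiminimal: every subset definable with parameters is countable or co-countable; but the associated closure operator cl_p, where cl_p(A) = { x : x does not realize the generic (co-countable) type over A }, does not satisfy the exchange property, hence is not a pregeometry. -/
open FirstOrder Set

namespace QM

variable (L : FirstOrder.Language) (M : Type*) [L.Structure M] (P : Pregeom M)

/-- The lexicographic order `ω₁ ×ₗ ℚ`. -/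
abbrev OmegaOneQ : Type := ((Cardinal.aleph 1).ord.ToType) ×ₗ ℚ

noncomputable instance : FirstOrder.Language.order.Structure OmegaOneQ :=
  FirstOrder.Language.orderStructure OmegaOneQ

/-! An order automorphism of `ω₁ ×ₗ ℚ` can move any point above a bound `m` to any other such
point while fixing everything up to `m`: the two points lie in a common interval `(m, z)`, which
is a countable dense order, hence homogeneous by Cantor's theorem, and an automorphism of it
extends by the identity. So a formula with parameters below `m` holds either on all of `(m, ∞)`
or nowhere there. As every initial segment `(-∞, m]` is countable while the whole order is not,
definable sets are countable or co-countable, and a countable one lies below all of its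
parameters. Hence `cl_p A` is the downward closure of `A`: `a < b` puts `a` in `cl_p {b}` and
outside `cl_p ∅`, while `b ∉ cl_p {a}`. -/

open FirstOrder.Language

section Homogeneity

variable {α : Type*} [LinearOrder α]

theorem exists_orderIso_extend_Ioo {m z : α} (g : Ioo m z ≃o Ioo m z) :
    ∃ F : α ≃o α, (∀ w : Ioo m z, F w = g w) ∧ ∀ w ∉ Ioo m z, F w = w := by
  let f := Equiv.Perm.ofSubtype g.toEquiv
  have hin : ∀ w (hw : w ∈ Ioo m z), f w = g ⟨w, hw⟩ := fun w hw =>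
    Equiv.Perm.ofSubtype_apply_of_mem g.toEquiv hw
  have hout : ∀ w ∉ Ioo m z, f w = w := fun w hw =>
    Equiv.Perm.ofSubtype_apply_of_not_mem g.toEquiv hw
  have hmono : StrictMono f := by
    intro v w hvw
    by_cases hv : v ∈ Ioo m z <;> by_cases hw : w ∈ Ioo m z
    · rw [hin v hv, hin w hw]
      exact g.strictMono (Subtype.mk_lt_mk.2 hvw)
    · rw [hin v hv, hout w hw]
      exact (g ⟨v, hv⟩).2.2.trans_le (not_lt.1 fun hwz => hw ⟨hv.1.trans hvw, hwz⟩)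
    · rw [hout v hv, hin w hw]
      exact (not_lt.1 fun hmv => hv ⟨hmv, hvw.trans hw.2⟩).trans_lt (g ⟨w, hw⟩).2.1
    · rw [hout v hv, hout w hw]
      exact hvw
  exact ⟨hmono.orderIsoOfRightInverse f f.symm f.apply_symm_apply,
    fun w => hin w w.2, hout⟩

theorem exists_orderIso_apply_eq_of_countable [Countable α] [DenselyOrdered α] [NoMinOrder α]
    [NoMaxOrder α] (x y : α) : ∃ g : α ≃o α, g x = y := by
  have : Nonempty α := ⟨x⟩
  obtain ⟨j⟩ := Order.iso_of_countable_dense α ℚ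
  refine ⟨(j.trans (OrderIso.addRight (j y - j x))).trans j.symm, ?_⟩
  simp

theorem exists_orderIso_apply_eq_of_lt [DenselyOrdered α] [NoMaxOrder α]
    (hIic : ∀ x : α, (Iic x).Countable) {m x y : α} (hx : m < x) (hy : m < y) :
    ∃ F : α ≃o α, F x = y ∧ ∀ w ≤ m, F w = w := by
  obtain ⟨z, hz⟩ := exists_gt (max x y)
  have hxz : x < z := (le_max_left x y).trans_lt hz
  have hyz : y < z := (le_max_right x y).trans_lt hz
  have : Countable (Ioo m z) := ((hIic z).mono fun w hw => hw.2.le).to_subtype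
  obtain ⟨g, hg⟩ := exists_orderIso_apply_eq_of_countable
    (⟨x, hx, hxz⟩ : Ioo m z) ⟨y, hy, hyz⟩
  obtain ⟨F, hFin, hFout⟩ := exists_orderIso_extend_Ioo g
  refine ⟨F, ?_, fun w hw => hFout w fun hmw => hw.not_gt hmw.1⟩
  rw [hFin ⟨x, hx, hxz⟩, hg]

end Homogeneity

section InitiallyCountable

variable {α : Type*} [LinearOrder α] [Language.order.Structure α]
  [Language.order.OrderedStructure α] (hIic : ∀ x : α, (Iic x).Countable)
include hIic

theorem Iic_subset_clp {A : Set α} {b : α} (hb : b ∈ A) : Iic b ⊆ clp Language.order α A := by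
  let le : Language.order.Formula (Fin 2) := (var (Sum.inl 0)).le (var (Sum.inl 1))
  have hle : solSet Language.order α le ![b] = Iic b := by
    ext x
    simp [le, solSet, Formula.Realize]
  intro a ha
  refine ⟨1, le, ![b], fun i => ?_, ?_, ?_⟩
  · simpa using hb
  · exact hle ▸ hIic b
  · exact hle ▸ ha

variable [DenselyOrdered α] [NoMaxOrder α]

theorem realize_cons_iff_of_lt {n : ℕ} (φ : Language.order.Formula (Fin (n + 1)))
    {c : Fin n → α} {m x y : α} (hc : ∀ i, c i ≤ m) (hx : m < x) (hy : m < y) :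
    φ.Realize (Fin.cons x c) ↔ φ.Realize (Fin.cons y c) := by
  obtain ⟨F, hFx, hFm⟩ := exists_orderIso_apply_eq_of_lt hIic hx hy
  have hF : F ∘ Fin.cons x c = Fin.cons y c := by
    funext i
    refine Fin.cases ?_ (fun j => ?_) i
    · simpa using hFx
    · simpa using hFm (c j) (hc j)
  rw [← hF, StrongHomClass.realize_formula]

theorem Ioi_subset_solSet_or_solSet_subset_Iic {n : ℕ}
    (φ : Language.order.Formula (Fin (n + 1))) {c : Fin n → α} {m : α} (hc : ∀ i, c i ≤ m) :
    Ioi m ⊆ solSet Language.order α φ c ∨ solSet Language.order α φ c ⊆ Iic m := by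
  by_cases h : ∃ x ∈ solSet Language.order α φ c, m < x
  · obtain ⟨x, hx, hmx⟩ := h
    exact Or.inl fun y hmy => (realize_cons_iff_of_lt hIic φ hc hmx hmy).1 hx
  · simp only [not_exists, not_and, not_lt] at h
    exact Or.inr h

theorem quasiminimal_of_countable_Iic [Nonempty α] : Quasiminimal Language.order α := by
  intro n φ c
  obtain ⟨m, hc⟩ := Finite.exists_le c
  rcases Ioi_subset_solSet_or_solSet_subset_Iic hIic φ hc with hsup | hsub
  · exact Or.inr ((hIic m).mono fun w hw => not_lt.1 fun hmw => hw (hsup hmw))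
  · exact Or.inl ((hIic m).mono hsub)

variable [Uncountable α]

theorem solSet_subset_Iic_of_countable {n : ℕ} {φ : Language.order.Formula (Fin (n + 1))}
    {c : Fin n → α} (hφ : (solSet Language.order α φ c).Countable) {m : α}
    (hc : ∀ i, c i ≤ m) : solSet Language.order α φ c ⊆ Iic m := by
  refine (Ioi_subset_solSet_or_solSet_subset_Iic hIic φ hc).resolve_left fun hsup => ?_
  refine not_countable_univ (((hIic m).union (hφ.mono hsup)).mono fun w _ => ?_)
  exact le_or_gt w m

theorem clp_subset_Iic {A : Set α} {m : α} (hA : ∀ x ∈ A, x ≤ m) :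
    clp Language.order α A ⊆ Iic m := by
  rintro x ⟨n, φ, c, hcA, hφ, hx⟩
  exact solSet_subset_Iic_of_countable hIic hφ (fun i => hA _ (hcA i)) hx

theorem not_exchange_clp [NoMinOrder α] :
    ¬ ∀ (A : Set α) (a b : α), a ∈ clp Language.order α (insert b A) →
      a ∉ clp Language.order α A → b ∈ clp Language.order α (insert a A) := by
  intro hexch
  obtain ⟨b⟩ : Nonempty α := inferInstance
  obtain ⟨a, hab⟩ := exists_lt b
  obtain ⟨m, hma⟩ := exists_lt a
  have ha : a ∈ clp Language.order α (insert b ∅) := Iic_subset_clp hIic (mem_insert b ∅) hab.le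
  have ha' : a ∉ clp Language.order α ∅ := fun h => hma.not_ge (clp_subset_Iic hIic (by simp) h)
  have hb : b ∈ clp Language.order α (insert a ∅) := hexch ∅ a b ha ha'
  exact hab.not_ge (clp_subset_Iic hIic (by simp) hb)

end InitiallyCountable

instance : Language.order.OrderedStructure OmegaOneQ := ⟨fun _ => Iff.rfl⟩

theorem OmegaOneQ.countable_Iic (x : OmegaOneQ) : (Iic x).Countable := by
  have hIio : (Iio (ofLex x).1).Countable := Cardinal.le_aleph0_iff_set_countable.1
    (Cardinal.lt_aleph_one_iff.1 (by simpa using Cardinal.mk_Iio_lt (ofLex x).1 (by simp)))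
  have hIic : (Iic (ofLex x).1).Countable := Iio_insert (a := (ofLex x).1) ▸ hIio.insert _
  refine ((hIic.prod countable_univ).image toLex).mono fun w hw => ?_
  have hw₁ : (ofLex w).1 ≤ (ofLex x).1 := by
    rcases Prod.Lex.le_iff.1 hw with h | ⟨h, _⟩
    exacts [h.le, h.le]
  exact ⟨ofLex w, ⟨hw₁, mem_univ _⟩, rfl⟩

instance : Uncountable OmegaOneQ := by
  have : Uncountable (Cardinal.aleph 1).ord.ToType := by
    rw [← not_countable_iff, ← Cardinal.mk_le_aleph0_iff, Cardinal.mk_ord_toType]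
    exact not_le.2 Cardinal.aleph0_lt_aleph_one
  exact (toLex.injective.comp (Prod.mk_left_injective (0 : ℚ))).uncountable

/-- `ω₁ ×ₗ ℚ` is quasiminimal, but the quasiminimal closure `cl_p` fails
the exchange property, hence is not a pregeometry. -/
theorem omegaOneQ_quasiminimal_not_exchange :
    Quasiminimal FirstOrder.Language.order OmegaOneQ ∧
    ¬ (∀ (A : Set OmegaOneQ) (a b : OmegaOneQ),
        a ∈ clp FirstOrder.Language.order OmegaOneQ (insert b A) →
        a ∉ clp FirstOrder.Language.order OmegaOneQ A →
        b ∈ clp FirstOrder.Language.order OmegaOneQ (insert a A)) :=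
  ⟨quasiminimal_of_countable_Iic OmegaOneQ.countable_Iic, not_exchange_clp OmegaOneQ.countable_Iic⟩

end QM
end

section
/- Let M be an uncountable structure in a countable language with the properties: (i') M is ℵ₀-homogeneous over ∅; (ii') countability is weakly definable in M, i.e. if a ∈ cl_p(b̄) then there is a formula φ(x, ȳ) over ∅ with M ⊨ φ(a, b̄) and |φ(M, b̄')| ≤ ℵ₀ for all b̄' ∈ M. Then the generic type p (of co-countable formulas) does not split over ∅: if ψ(M, b̄) is countable and tp(b̄') = tp(b̄), then ψ(M, b̄') is countable. -/
open FirstOrder Set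

namespace QM

variable (L : FirstOrder.Language) (M : Type*) [L.Structure M] (P : Pregeom M)

/-- for an uncountable quasiminimal `M` which is ℵ₀-homogeneous over ∅
and in which countability is weakly definable, the generic type does not split
over ∅. -/
theorem weak_definability_nonsplitting (L : FirstOrder.Language) (M : Type*)
    [L.Structure M] [Uncountable M] (hq : Quasiminimal L M)
    (hom : ∀ (n m : ℕ) (b b' : Fin n → M), EqFull L b b' →
      ∀ a : Fin m → M, ∃ a' : Fin m → M, EqFull L (Sum.elim a b) (Sum.elim a' b'))
    (hwd : ∀ (n : ℕ) (b : Fin n → M) (a : M), a ∈ clp L M (Set.range b) →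
      ∃ φ : L.Formula (Fin (n + 1)), a ∈ solSet L M φ b ∧
        ∀ b' : Fin n → M, (solSet L M φ b').Countable) :
    ∀ (n : ℕ) (ψ : L.Formula (Fin (n + 1))) (b b' : Fin n → M), EqFull L b b' →
      (solSet L M ψ b).Countable → (solSet L M ψ b').Countable := by
  intro n ψ b b' hbb' hcount
  classical
  have hsym : EqFull L b' b := fun φ => (hbb' φ).symm
  set e : Fin (n+1) → (Fin 1 ⊕ Fin n) := Fin.cases (Sum.inl 0) Sum.inr with he
  have hcomp : ∀ (x : M) (c : Fin n → M),
      Sum.elim (fun _ : Fin 1 => x) c ∘ e = Fin.cons x c := by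
    intro x c
    funext i
    refine Fin.cases ?_ ?_ i <;> simp [e]
  have key : ∀ (χ : L.Formula (Fin (n+1))) (x : M) (c : Fin n → M),
      (χ.relabel e).Realize (Sum.elim (fun _ : Fin 1 => x) c) ↔ x ∈ solSet L M χ c := by
    intro χ x c
    rw [Language.Formula.realize_relabel, hcomp]
    rfl
  have hwd' : ∀ a ∈ solSet L M ψ b, ∃ φ : L.Formula (Fin (n+1)),
      a ∈ solSet L M φ b ∧ ∀ b'' : Fin n → M, (solSet L M φ b'').Countable := by
    intro a ha
    exact hwd n b a ⟨n, ψ, b, fun i => Set.mem_range_self i, hcount, ha⟩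
  choose! φf hφ1 hφ2 using hwd'
  have hsub : solSet L M ψ b' ⊆ ⋃ a ∈ solSet L M ψ b, solSet L M (φf a) b' := by
    intro a' ha'
    obtain ⟨af, haf⟩ := hom n 1 b' b hsym (fun _ => a')
    set a := af 0 with hadef
    have hafeq : af = fun _ : Fin 1 => a := by
      funext i; rw [Subsingleton.elim i 0]
    rw [hafeq] at haf
    have hamem : a ∈ solSet L M ψ b := by
      rw [← key ψ a b]
      exact (haf (ψ.relabel e)).mp ((key ψ a' b').mpr ha')
    have hmem2 : a' ∈ solSet L M (φf a) b' := by
      rw [← key (φf a) a' b']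
      exact (haf ((φf a).relabel e)).mpr ((key (φf a) a b).mpr (hφ1 a hamem))
    exact Set.mem_biUnion hamem hmem2
  exact Set.Countable.mono hsub (hcount.biUnion fun a ha => hφ2 a ha b')


end QM
end
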